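/- The branching rule for symplectic Schur functions, odd step: for λ ∈ ℕ^r weakly decreasing, s_λ^{2r-1}(q_1,...,q_r) = Σ_{β ⪯ λ, β ∈ ℕ^{r-1}} q_r^{|λ| - |β|} · s_β^{2r-2}(q_1,...,q_{r-1}), where the sum is over weakly decreasing β ∈ ℕ^{r-1} interlacing with λ (including λ_r ≤ β_{r-1}). -/
import Mathlib


/-- Length of the (0-indexed) `i`-th row of a symplectic Gelfand–Tsetlin pattern
(row `i` corresponds to `x^{i+1}` in the paper, of length `⌊(i+2)/2⌋`). -/
def rowLen (i : ℕ) : ℕ := (i + 2) / 2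

/-- A symplectic Gelfand–Tsetlin pattern of depth `k`: rows `x 0, …, x (k-1)` of
nonnegative integers (entries outside the pattern are `0`), with consecutive rows
interlacing: `x i j ≤ x (i+1) j` and `x (i+1) (j+1) ≤ x i j`. -/
structure SGT (k : ℕ) where
  x : ℕ → ℕ → ℕ
  zero_outside : ∀ i j, (k ≤ i ∨ rowLen i ≤ j) → x i j = 0
  le_above : ∀ i j, i + 1 < k → j < rowLen i → x i j ≤ x (i+1) j
  above_le : ∀ i j, i + 1 < k → j + 1 < rowLen (i+1) → x (i+1) (j+1) ≤ x i j

/-- Sum `|x^{i+1}|` of the coordinates of row `i` of a pattern. -/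
def rowSum {k : ℕ} (P : SGT k) (i : ℕ) : ℕ := ∑ j ∈ Finset.range (rowLen i), P.x i j

/-- The monomial weight `w_x^k(q)` of a symplectic Gelfand–Tsetlin pattern. -/
noncomputable def weight {k : ℕ} (P : SGT k) (q : ℕ → ℝ) : ℝ :=
  ∏ i ∈ Finset.range k,
    q (i / 2) ^ ((if i % 2 = 0 then (1 : ℤ) else -1) *
      ((rowSum P i : ℤ) - (if i = 0 then 0 else (rowSum P (i - 1) : ℤ))))

/-- The symplectic Schur function `s_λ^k(q)`, a (finite) sum of weights over all
patterns of depth `k` with top row `λ`. -/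
noncomputable def schur (k : ℕ) (lam : ℕ → ℕ) (q : ℕ → ℝ) : ℝ :=
  ∑ᶠ P ∈ {P : SGT k | ∀ j, P.x (k - 1) j = lam j}, weight P q

theorem SGT.ext' {k : ℕ} {P Q : SGT k} (h : P.x = Q.x) : P = Q := by
  cases P; cases Q; cases h; rfl

theorem rowLen_mono {i j : ℕ} (h : i ≤ j) : rowLen i ≤ rowLen j :=
  Nat.div_le_div_right (by omega)

theorem SGT.le_succ_row {k : ℕ} (P : SGT k) (i j : ℕ) (h : i + 1 < k) :
    P.x i j ≤ P.x (i + 1) j := by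
  by_cases hj : j < rowLen i
  · exact P.le_above i j h hj
  · rw [P.zero_outside i j (Or.inr (le_of_not_gt hj))]; exact Nat.zero_le _

theorem SGT.le_top {k : ℕ} (P : SGT k) (i j : ℕ) : P.x i j ≤ P.x (k - 1) j := by
  by_cases hik : i < k
  · obtain ⟨d, hd⟩ : ∃ d, i + d = k - 1 := ⟨k - 1 - i, by omega⟩
    clear hik
    induction d generalizing i with
    | zero => have : i = k - 1 := by omega
              rw [this]
    | succ n ih =>
      exact le_trans (P.le_succ_row i j (by omega)) (ih (i+1) (by omega))
  · rw [P.zero_outside i j (Or.inl (le_of_not_gt hik))]; exact Nat.zero_le _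

theorem finite_top (k : ℕ) (μ : ℕ → ℕ) :
    {P : SGT k | ∀ j, P.x (k - 1) j = μ j}.Finite := by
  set N := ∑ j ∈ Finset.range (rowLen (k - 1)), μ j with hN
  have hbound : ∀ P ∈ {P : SGT k | ∀ j, P.x (k-1) j = μ j}, ∀ i j, P.x i j ≤ N := by
    intro P hP i j
    by_cases hj : j < rowLen (k - 1)
    · have h1 : P.x i j ≤ P.x (k-1) j := P.le_top i j
      rw [hP j] at h1
      exact h1.trans (Finset.single_le_sum (fun _ _ => Nat.zero_le _)
        (Finset.mem_range.mpr hj))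
    · by_cases hik : i < k
      · rw [P.zero_outside i j (Or.inr (le_trans (rowLen_mono (by omega)) (le_of_not_gt hj)))]
        exact Nat.zero_le _
      · rw [P.zero_outside i j (Or.inl (le_of_not_gt hik))]; exact Nat.zero_le _
  apply Set.Finite.of_finite_image
    (f := fun P => fun (i : Fin k) (j : Fin (rowLen (k-1))) =>
      (⟨min (P.x i j) N, Nat.lt_succ_of_le (min_le_right _ _)⟩ : Fin (N+1)))
  · exact Set.toFinite _
  · intro P hP Q hQ hPQ
    apply SGT.ext'
    funext i j
    by_cases hik : i < k
    · by_cases hj : j < rowLen i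
      · have hj' : j < rowLen (k-1) := lt_of_lt_of_le hj (rowLen_mono (by omega))
        have h0 := congrFun (congrFun hPQ ⟨i, hik⟩) ⟨j, hj'⟩
        have h1 : min (P.x i j) N = min (Q.x i j) N := by
          simpa using h0
        rwa [min_eq_left (hbound P hP i j), min_eq_left (hbound Q hQ i j)] at h1
      · rw [P.zero_outside i j (Or.inr (le_of_not_gt hj)),
            Q.zero_outside i j (Or.inr (le_of_not_gt hj))]
    · rw [P.zero_outside i j (Or.inl (le_of_not_gt hik)),
          Q.zero_outside i j (Or.inl (le_of_not_gt hik))]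

def SGT.trunc {k : ℕ} (P : SGT k) (m : ℕ) (hm : m ≤ k) : SGT m where
  x i j := if i < m then P.x i j else 0
  zero_outside i j h := by
    show (if i < m then P.x i j else 0) = 0
    by_cases hi : i < m
    · rw [if_pos hi]
      exact P.zero_outside i j (by rcases h with h | h; exacts [absurd h (by omega), Or.inr h])
    · exact if_neg hi
  le_above i j h hj := by
    show (if i < m then P.x i j else 0) ≤ (if i + 1 < m then P.x (i+1) j else 0)
    rw [if_pos (by omega : i < m), if_pos h]
    exact P.le_above i j (by omega) hj
  above_le i j h hj := by
    show (if i + 1 < m then P.x (i+1) (j+1) else 0) ≤ (if i < m then P.x i j else 0)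
    rw [if_pos (by omega : i < m), if_pos h]
    exact P.above_le i j (by omega) hj

theorem rowLen_even (m : ℕ) : rowLen (2*m+2) = m+2 := by unfold rowLen; omega
theorem rowLen_odd (m : ℕ) : rowLen (2*m+1) = m+1 := by unfold rowLen; omega

def extend (m : ℕ) (lam β : ℕ → ℕ) (hsupp : ∀ j, m + 2 ≤ j → lam j = 0)
    (hβle : ∀ j, j < m + 1 → β j ≤ lam j) (hleβ : ∀ j, j < m + 1 → lam (j+1) ≤ β j)
    (P : SGT (2*m+2)) (hP : ∀ j, P.x (2*m+1) j = β j) : SGT (2*m+3) where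
  x i j := if i = 2*m+2 then lam j else P.x i j
  zero_outside i j h := by
    show (if i = 2*m+2 then lam j else P.x i j) = 0
    rcases h with h | h
    · rw [if_neg (by omega)]
      exact P.zero_outside i j (Or.inl (by omega))
    · by_cases hi : i = 2*m+2
      · rw [if_pos hi]
        apply hsupp
        rw [hi, rowLen_even] at h
        exact h
      · rw [if_neg hi]
        exact P.zero_outside i j (Or.inr h)
  le_above i j h hj := by
    show (if i = 2*m+2 then lam j else P.x i j) ≤ (if i+1 = 2*m+2 then lam j else P.x (i+1) j)
    rw [if_neg (by omega : ¬ i = 2*m+2)]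
    by_cases hi : i + 1 = 2*m+2
    · rw [if_pos hi]
      have hij : i = 2*m+1 := by omega
      rw [hij, hP j]
      apply hβle
      rw [hij, rowLen_odd] at hj
      exact hj
    · rw [if_neg hi]
      exact P.le_above i j (by omega) hj
  above_le i j h hj := by
    show (if i+1 = 2*m+2 then lam (j+1) else P.x (i+1) (j+1)) ≤ (if i = 2*m+2 then lam j else P.x i j)
    rw [if_neg (by omega : ¬ i = 2*m+2)]
    by_cases hi : i + 1 = 2*m+2
    · rw [if_pos hi]
      have hij : i = 2*m+1 := by omega
      rw [hij, hP j]
      apply hleβ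
      rw [hi, rowLen_even] at hj
      omega
    · rw [if_neg hi]
      exact P.above_le i j (by omega) hj

theorem step (m : ℕ) (q : ℕ → ℝ) (lam β : ℕ → ℕ)
    (hsupp : ∀ j, m + 2 ≤ j → lam j = 0)
    (hβle : ∀ j, j < m + 1 → β j ≤ lam j)
    (hleβ : ∀ j, j < m + 1 → lam (j+1) ≤ β j) :
    ∑ᶠ P ∈ {P : SGT (2*m+3) | (∀ j, P.x (2*m+2) j = lam j) ∧ ∀ j, P.x (2*m+1) j = β j},
        weight P q
      = q (m+1) ^ ((∑ j ∈ Finset.range (m+2), (lam j : ℤ))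
            - ∑ j ∈ Finset.range (m+1), (β j : ℤ)) * schur (2*m+2) β q := by
  have e1 : 2*m+2-1 = 2*m+1 := by omega
  set c : ℤ := (∑ j ∈ Finset.range (m+2), (lam j : ℤ))
      - ∑ j ∈ Finset.range (m+1), (β j : ℤ) with hc
  simp only [schur, e1]
  have hBfin : {P' : SGT (2*m+2) | ∀ j, P'.x (2*m+1) j = β j}.Finite := by
    have := finite_top (2*m+2) β
    simpa [e1] using this
  rw [finsum_mem_eq_finite_toFinset_sum _ hBfin, Finset.mul_sum,
    ← finsum_mem_eq_finite_toFinset_sum (fun P' => q (m+1) ^ c * weight P' q) hBfin]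
  have htr : (2:ℕ)*m+2 ≤ 2*m+3 := by omega
  apply finsum_mem_eq_of_bijOn (fun P => P.trunc (2*m+2) htr)
  · refine ⟨?_, ?_, ?_⟩
    · -- MapsTo
      rintro P ⟨h1, h2⟩ j
      show (if 2*m+1 < 2*m+2 then P.x (2*m+1) j else 0) = β j
      rw [if_pos (by omega)]
      exact h2 j
    · -- InjOn
      rintro P ⟨hP1, hP2⟩ Q ⟨hQ1, hQ2⟩ h
      apply SGT.ext'
      funext i j
      by_cases hi : i < 2*m+2
      · have := congrFun (congrFun (congrArg SGT.x h) i) j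
        simp only [SGT.trunc, if_pos hi] at this
        exact this
      · by_cases hi2 : i = 2*m+2
        · rw [hi2, hP1 j, hQ1 j]
        · rw [P.zero_outside i j (Or.inl (by omega)),
            Q.zero_outside i j (Or.inl (by omega))]
    · -- SurjOn
      rintro P' hP'
      refine ⟨extend m lam β hsupp hβle hleβ P' hP', ⟨fun j => if_pos rfl, fun j => ?_⟩, ?_⟩
      · show (if 2*m+1 = 2*m+2 then lam j else P'.x (2*m+1) j) = β j
        rw [if_neg (by omega)]
        exact hP' j
      · apply SGT.ext'
        funext i j
        show (if i < 2*m+2 then (if i = 2*m+2 then lam j else P'.x i j) else 0) = P'.x i j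
        by_cases hi : i < 2*m+2
        · rw [if_pos hi, if_neg (by omega)]
        · rw [if_neg hi, P'.zero_outside i j (Or.inl (by omega))]
  · -- weight identity
    rintro P ⟨h1, h2⟩
    have hrow : ∀ i, i < 2*m+2 → rowSum (P.trunc (2*m+2) htr) i = rowSum P i := by
      intro i hi
      unfold rowSum
      apply Finset.sum_congr rfl
      intro j _
      show (if i < 2*m+2 then P.x i j else 0) = P.x i j
      rw [if_pos hi]
    simp only [weight]
    have hr : Finset.range (2*m+3) = Finset.range ((2*m+2)+1) := by
      congr 1
    rw [hr, Finset.prod_range_succ]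
    have hprod : ∀ i ∈ Finset.range (2*m+2),
        q (i / 2) ^ ((if i % 2 = 0 then (1 : ℤ) else -1) *
          ((rowSum P i : ℤ) - (if i = 0 then 0 else (rowSum P (i - 1) : ℤ))))
        = q (i / 2) ^ ((if i % 2 = 0 then (1 : ℤ) else -1) *
          ((rowSum (P.trunc (2*m+2) htr) i : ℤ) -
            (if i = 0 then 0 else (rowSum (P.trunc (2*m+2) htr) (i - 1) : ℤ)))) := by
      intro i hi
      rw [Finset.mem_range] at hi
      rw [hrow i hi]
      by_cases h0 : i = 0
      · rw [if_pos h0, if_pos h0]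
      · rw [if_neg h0, if_neg h0, hrow (i-1) (by omega)]
    rw [Finset.prod_congr rfl hprod]
    have hlast : q ((2*m+2) / 2) ^ ((if (2*m+2) % 2 = 0 then (1 : ℤ) else -1) *
        ((rowSum P (2*m+2) : ℤ) - (if 2*m+2 = 0 then 0 else (rowSum P (2*m+2 - 1) : ℤ))))
        = q (m+1) ^ c := by
      have hs1 : rowSum P (2*m+2) = ∑ j ∈ Finset.range (m+2), lam j := by
        unfold rowSum
        rw [rowLen_even]
        exact Finset.sum_congr rfl fun j _ => h1 j
      have hs2 : rowSum P (2*m+1) = ∑ j ∈ Finset.range (m+1), β j := by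
        unfold rowSum
        rw [rowLen_odd]
        exact Finset.sum_congr rfl fun j _ => h2 j
      rw [if_pos (by omega : (2*m+2) % 2 = 0), if_neg (by omega : ¬ 2*m+2 = 0),
        e1, hs1, hs2, show (2*m+2)/2 = m+1 by omega, one_mul, hc]
      push_cast
      ring_nf
    rw [hlast, mul_comm]

theorem S_finite (n : ℕ) (lam : ℕ → ℕ) (hdec : ∀ j, lam (j + 1) ≤ lam j) :
    {β : ℕ → ℕ | (∀ j, n ≤ j → β j = 0) ∧ (∀ j, j + 1 < n + 1 → β j ≤ lam j) ∧
      (∀ j, j + 1 < n + 1 → lam (j + 1) ≤ β j)}.Finite := by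
  have hanti : ∀ a b : ℕ, a ≤ b → lam b ≤ lam a := fun a b h =>
    antitone_nat_of_succ_le hdec h
  have hbound : ∀ β ∈ {β : ℕ → ℕ | (∀ j, n ≤ j → β j = 0) ∧
      (∀ j, j + 1 < n + 1 → β j ≤ lam j) ∧ (∀ j, j + 1 < n + 1 → lam (j + 1) ≤ β j)},
      ∀ j, β j ≤ lam 0 := by
    rintro β ⟨h1, h2, _⟩ j
    by_cases hj : j < n
    · exact le_trans (h2 j (by omega)) (hanti 0 j (Nat.zero_le j))
    · rw [h1 j (by omega)]; exact Nat.zero_le _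
  apply Set.Finite.of_finite_image
    (f := fun β => fun (j : Fin n) =>
      (⟨min (β j) (lam 0), Nat.lt_succ_of_le (min_le_right _ _)⟩ : Fin (lam 0 + 1)))
  · exact Set.toFinite _
  · rintro β hβ γ hγ h
    funext j
    by_cases hj : j < n
    · have h0 := congrFun h ⟨j, hj⟩
      have h1 : min (β j) (lam 0) = min (γ j) (lam 0) := by simpa using h0
      rwa [min_eq_left (hbound β hβ j), min_eq_left (hbound γ hγ j)] at h1
    · rw [hβ.1 j (by omega), hγ.1 j (by omega)]

def sgtZero : SGT 0 :=
  ⟨fun _ _ => 0, fun _ _ _ => rfl, fun i j h => absurd h (by omega),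
   fun i j h => absurd h (by omega)⟩

def sgtOne (lam : ℕ → ℕ) (hsupp : ∀ j, 1 ≤ j → lam j = 0) : SGT 1 :=
  ⟨fun i j => if i = 0 then lam j else 0,
   fun i j h => by
     show (if i = 0 then lam j else 0) = 0
     by_cases hi : i = 0
     · subst hi
       rw [if_pos rfl]
       apply hsupp
       rcases h with h | h
       · omega
       · have h1 : rowLen 0 = 1 := rfl
         omega
     · exact if_neg hi,
   fun i j h _ => absurd h (by omega),
   fun i j h _ => absurd h (by omega)⟩


/-- Branching rule for symplectic Schur functions, odd step:
`s_λ^{2r-1}(q) = Σ_{β ⪯ λ, β ∈ ℕ^{r-1}} q_r^{|λ|-|β|} s_β^{2r-2}(q)`. -/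
theorem branching_odd (r : ℕ) (hr : 0 < r) (q : ℕ → ℝ) (hq : ∀ i, 0 < q i)
    (lam : ℕ → ℕ) (hdec : ∀ j, lam (j + 1) ≤ lam j)
    (hsupp : ∀ j, r ≤ j → lam j = 0) :
    schur (2 * r - 1) lam q =
      ∑ᶠ β ∈ {β : ℕ → ℕ | (∀ j, r - 1 ≤ j → β j = 0) ∧
          (∀ j, j + 1 < r → β j ≤ lam j) ∧ (∀ j, j + 1 < r → lam (j + 1) ≤ β j)},
        q (r - 1) ^ ((∑ j ∈ Finset.range r, (lam j : ℤ)) -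
            ∑ j ∈ Finset.range (r - 1), (β j : ℤ)) *
          schur (2 * r - 2) β q := by
  rcases Nat.lt_or_ge r 2 with hr2 | hr2
  · -- r = 1
    have hr1 : r = 1 := by omega
    subst hr1
    simp only [show (2 * 1 - 1 : ℕ) = 1 by norm_num, show (2 * 1 - 2 : ℕ) = 0 by norm_num,
      show (1 - 1 : ℕ) = 0 by norm_num]
    have hSet : {β : ℕ → ℕ | (∀ j, 0 ≤ j → β j = 0) ∧
        (∀ j, j + 1 < 1 → β j ≤ lam j) ∧ (∀ j, j + 1 < 1 → lam (j + 1) ≤ β j)}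
        = {fun _ => 0} := by
      ext β
      simp only [Set.mem_setOf_eq, Set.mem_singleton_iff]
      constructor
      · rintro ⟨h1, -, -⟩
        funext j
        exact h1 j (Nat.zero_le j)
      · rintro rfl
        exact ⟨fun _ _ => rfl, fun j hj => absurd hj (by omega), fun j hj => absurd hj (by omega)⟩
    rw [hSet, finsum_mem_singleton]
    have h0 : schur 0 (fun _ => (0 : ℕ)) q = 1 := by
      have hset0 : {P : SGT 0 | ∀ j, P.x (0 - 1) j = (fun _ => (0 : ℕ)) j} = {sgtZero} := by
        ext P
        simp only [Set.mem_setOf_eq, Set.mem_singleton_iff]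
        constructor
        · intro _
          apply SGT.ext'
          funext i j
          rw [P.zero_outside i j (Or.inl (Nat.zero_le i))]
          rfl
        · rintro rfl j
          rfl
      rw [schur, hset0, finsum_mem_singleton]
      simp [weight]
    rw [h0, mul_one]
    have hset1 : {P : SGT 1 | ∀ j, P.x (1 - 1) j = lam j} = {sgtOne lam hsupp} := by
      ext P
      simp only [Set.mem_setOf_eq, Set.mem_singleton_iff]
      constructor
      · intro hP
        apply SGT.ext'
        funext i j
        by_cases hi : i = 0
        · subst hi
          have h1 := hP j
          simp only [show (1 - 1 : ℕ) = 0 from rfl] at h1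
          rw [h1]
          show lam j = if (0:ℕ) = 0 then lam j else 0
          rw [if_pos rfl]
        · rw [P.zero_outside i j (Or.inl (by omega))]
          show (0:ℕ) = if i = 0 then lam j else 0
          rw [if_neg hi]
      · rintro rfl j
        show (if (1 - 1 : ℕ) = 0 then lam j else 0) = lam j
        rw [if_pos rfl]
    rw [schur, hset1, finsum_mem_singleton]
    simp only [weight, rowSum, sgtOne]
    rw [Finset.prod_range_one]
    norm_num
    norm_cast
  · obtain ⟨m, rfl⟩ : ∃ m, r = m + 2 := ⟨r - 2, by omega⟩
    simp only [show 2 * (m + 2) - 1 = 2 * m + 3 by omega, show 2 * (m + 2) - 2 = 2 * m + 2 by omega,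
      show m + 2 - 1 = m + 1 by omega]
    rw [schur]
    simp only [show 2 * m + 3 - 1 = 2 * m + 2 by omega]
    set S : Set (ℕ → ℕ) := {β : ℕ → ℕ | (∀ j, m + 1 ≤ j → β j = 0) ∧
        (∀ j, j + 1 < m + 2 → β j ≤ lam j) ∧ (∀ j, j + 1 < m + 2 → lam (j + 1) ≤ β j)} with hSdef
    set t : (ℕ → ℕ) → Set (SGT (2 * m + 3)) := fun β =>
      {P : SGT (2 * m + 3) | (∀ j, P.x (2 * m + 2) j = lam j) ∧ ∀ j, P.x (2 * m + 1) j = β j}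
      with htdef
    have hAfin : {P : SGT (2 * m + 3) | ∀ j, P.x (2 * m + 2) j = lam j}.Finite := by
      have := finite_top (2 * m + 3) lam
      simpa [show 2 * m + 3 - 1 = 2 * m + 2 by omega] using this
    have hU : {P : SGT (2 * m + 3) | ∀ j, P.x (2 * m + 2) j = lam j} = ⋃ β ∈ S, t β := by
      ext P
      constructor
      · intro hA
        refine Set.mem_biUnion (?_ : (fun j => P.x (2 * m + 1) j) ∈ S) ⟨hA, fun j => rfl⟩
        refine ⟨fun j hj => P.zero_outside _ j (Or.inr (by rw [rowLen_odd]; omega)), ?_, ?_⟩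
        · intro j hj
          have := P.le_above (2 * m + 1) j (by omega) (by rw [rowLen_odd]; omega)
          rwa [show 2 * m + 1 + 1 = 2 * m + 2 by omega, hA j] at this
        · intro j hj
          have := P.above_le (2 * m + 1) j (by omega) (by rw [show 2*m+1+1 = 2*m+2 by omega, rowLen_even]; omega)
          rwa [show 2 * m + 1 + 1 = 2 * m + 2 by omega, hA (j + 1)] at this
      · intro hP
        obtain ⟨β, -, hPβ⟩ := Set.mem_iUnion₂.mp hP
        exact hPβ.1
    rw [hU]
    have hdisj : S.PairwiseDisjoint t := by
      intro a _ b _ hab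
      apply Set.disjoint_left.mpr
      rintro P ⟨-, h2a⟩ ⟨-, h2b⟩
      exact hab (funext fun j => (h2a j).symm.trans (h2b j))
    have hSfin : S.Finite := S_finite (m + 1) lam hdec
    have htfin : ∀ β ∈ S, (t β).Finite :=
      fun β _ => hAfin.subset fun P hP => hP.1
    rw [finsum_mem_biUnion hdisj hSfin htfin]
    apply finsum_mem_congr rfl
    intro β hβ
    exact step m q lam β (fun j hj => hsupp j (by omega))
      (fun j hj => hβ.2.1 j (by omega)) (fun j hj => hβ.2.2 j (by omega))
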